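/- arXiv:2501.00393 — 13 statements merged into one kernel-verified Lean document; each statement's English description precedes it below -/
import Mathlib

section
/- If (X,d) is a semimetric space in which every closed ball is a closed subset of the topological space (X,τ_d) (where τ_d is the topology whose open sets A satisfy: for every a∈A there is r>0 with the open ball B(a,r)⊆A), then for all points x,y∈X and every sequence (x_n), if lim d(x_n,x)=0 and lim d(x_n,y)=0, then x=y. -/
open Set Filter Topology

structure IsSemimetric {X : Type*} (d : X → X → ℝ) : Prop where
  nonneg : ∀ x y, 0 ≤ d x y
  eq_iff : ∀ x y, d x y = 0 ↔ x = y
  symm : ∀ x y, d x y = d y x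

/-- `η` is a homeomorphism of `[0,∞)` onto itself (increasing, `η 0 = 0`). -/
structure IsQSHomeo (η : ℝ → ℝ) : Prop where
  maps : ∀ t, 0 ≤ t → 0 ≤ η t
  zero : η 0 = 0
  strictMonoOn : StrictMonoOn η (Set.Ici 0)
  surjOn : ∀ s, 0 ≤ s → ∃ t, 0 ≤ t ∧ η t = s
  continuousOn : ContinuousOn η (Set.Ici 0)

/-- `f` is an `η`-quasisymmetric mapping between the semimetric spaces `(X,d)` and `(Y,ρ)`. -/
def IsQuasisymmetric {X Y : Type*} (d : X → X → ℝ) (ρ : Y → Y → ℝ)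
    (η : ℝ → ℝ) (f : X → Y) : Prop :=
  IsQSHomeo η ∧ ∀ (x a b : X) (t : ℝ), 0 < t →
    d x a ≤ t * d x b → ρ (f x) (f a) ≤ η t * ρ (f x) (f b)

structure IsTriangleFunction {X : Type*} (d : X → X → ℝ) (Φ : ℝ → ℝ → ℝ) : Prop where
  symm : ∀ u v, Φ u v = Φ v u
  mono : ∀ u u' v v', 0 ≤ u → u ≤ u' → 0 ≤ v → v ≤ v' → Φ u v ≤ Φ u' v'
  zero : Φ 0 0 = 0
  tri : ∀ x y z, d x y ≤ Φ (d x z) (d y z)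

def IsPtolemaic {X : Type*} (d : X → X → ℝ) : Prop :=
  ∀ x y z t : X, d x z * d t y ≤ d x y * d t z + d x t * d y z

def distSet {X : Type*} (d : X → X → ℝ) (A : Set X) : Set ℝ :=
  {r | ∃ x ∈ A, ∃ y ∈ A, r = d x y}

noncomputable def sdiam {X : Type*} (d : X → X → ℝ) (A : Set X) : ℝ :=
  sSup (distSet d A)

def spectrum' {X : Type*} (d : X → X → ℝ) : Set ℝ := {r | ∃ x y : X, r = d x y}

def IsWeakSimilarity {X Y : Type*} (d : X → X → ℝ) (ρ : Y → Y → ℝ)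
    (f : X → Y) (φ : ℝ → ℝ) : Prop :=
  Function.Bijective f ∧ StrictMonoOn φ (spectrum' d) ∧
    φ '' spectrum' d = spectrum' ρ ∧ ∀ x y, φ (d x y) = ρ (f x) (f y)

/-- The topology `τ_d` generated by a semimetric `d`. -/
def tauD {X : Type*} (d : X → X → ℝ) : TopologicalSpace X where
  IsOpen A := ∀ a ∈ A, ∃ r > 0, {x | d a x < r} ⊆ A
  isOpen_univ := fun _ _ => ⟨1, one_pos, fun _ _ => trivial⟩
  isOpen_inter := fun A B hA hB a ha => by
    obtain ⟨r1, hr1, h1⟩ := hA a ha.1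
    obtain ⟨r2, hr2, h2⟩ := hB a ha.2
    refine ⟨min r1 r2, lt_min hr1 hr2, fun x hx => ⟨h1 ?_, h2 ?_⟩⟩
    · have hx' : d a x < min r1 r2 := hx
      exact lt_of_lt_of_le hx' (min_le_left r1 r2)
    · have hx' : d a x < min r1 r2 := hx
      exact lt_of_lt_of_le hx' (min_le_right r1 r2)
  isOpen_sUnion := fun S hS a ha => by
    obtain ⟨A, hA, haA⟩ := ha
    obtain ⟨r, hr, h⟩ := hS A hA a haA
    exact ⟨r, hr, fun x hx => ⟨A, hA, h hx⟩⟩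

theorem tendsto_nhds_tauD {X ι : Type*} {d : X → X → ℝ} {l : Filter ι} {u : ι → X} {y : X}
    (h : Tendsto (fun i => d y (u i)) l (𝓝 0)) : Tendsto u l (@nhds X (tauD d) y) := by
  let := tauD d
  intro U hU
  obtain ⟨V, hVU, hV, hyV⟩ := mem_nhds_iff.1 hU
  obtain ⟨r, hr, hball⟩ := hV y hyV
  exact (h.eventually (gt_mem_nhds hr)).mono fun i hi => hVU (hball hi)

theorem IsSemimetric.eq_of_forall_pos_le {X : Type*} {d : X → X → ℝ} (hd : IsSemimetric d)
    {x y : X} (h : ∀ r > 0, d x y ≤ r) : x = y :=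
  (hd.eq_iff x y).1 <| le_antisymm (le_of_forall_pos_le_add fun r hr => by simpa using h r hr)
    (hd.nonneg x y)

theorem stmt_0 {X : Type*} (d : X → X → ℝ) (hd : IsSemimetric d)
    (hclosed : ∀ (a : X) (r : ℝ), 0 < r → @IsClosed X (tauD d) {x | d a x ≤ r}) :
    ∀ (x y : X) (xs : ℕ → X),
      Tendsto (fun n => d (xs n) x) atTop (𝓝 0) →
      Tendsto (fun n => d (xs n) y) atTop (𝓝 0) → x = y := by
  intro x y xs hx hy
  let := tauD d
  have hxs_y : Tendsto xs atTop (𝓝 y) := tendsto_nhds_tauD (by simpa only [hd.symm y] using hy)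
  refine hd.eq_of_forall_pos_le fun r hr => (hclosed x r hr).mem_of_tendsto hxs_y ?_
  filter_upwards [hx.eventually (ge_mem_nhds hr)] with n hn
  rwa [hd.symm x]
end

section
/- Let (X,d) be a semimetric space such that the topological space (X,τ_d) is first countable. Then the following are equivalent: (i) for all x,y∈X and every sequence (x_n), lim d(x_n,x)=0=lim d(x_n,y) implies x=y; (ii) (X,τ_d) is Hausdorff. -/
open Set Filter Topology

/-! If (i) holds, every ball `{y | d x y < r}` is a `τ_d`-neighbourhood of `x`. Otherwise first
countability gives `z → x` in `τ_d` with `d x (z k) ≥ r`. As `x` lies in the complement of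
`range z` but that complement is not a neighbourhood of `x`, it is not open, so some `a ∉ range z`
is the `d`-limit of a subsequence of `z`, and `a ≠ x`. Repeating the argument with the closed set
`{a}` added to the range yields a point `b ≠ a` that is the `d`-limit of a further subsequence,
contradicting (i). Once balls are neighbourhoods, `τ_d`-convergence and `d`-convergence agree,
so (i) says exactly that sequential limits are unique, which in a first countable space is the
Hausdorff property. -/

def SeqLimitsUnique {X : Type*} (d : X → X → ℝ) : Prop :=
  ∀ (x y : X) (xs : ℕ → X),
    Tendsto (fun n => d (xs n) x) atTop (𝓝 0) → Tendsto (fun n => d (xs n) y) atTop (𝓝 0) → x = y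

namespace IsSemimetric

variable {X : Type*} {d : X → X → ℝ}

theorem t1Space_tauD (hd : IsSemimetric d) : @T1Space X (tauD d) := by
  let _ := tauD d
  refine ⟨fun q => isOpen_compl_iff.mp fun a (ha : a ≠ q) => ?_⟩
  refine ⟨d a q, (hd.nonneg a q).lt_of_ne' fun h => ha ((hd.eq_iff a q).mp h), ?_⟩
  rintro x (hx : d a x < d a q) rfl
  exact lt_irrefl _ hx

theorem tendsto_tauD_of_tendsto_dist {ι : Type*} {l : Filter ι} (hd : IsSemimetric d)
    {u : ι → X} {x : X} (hu : Tendsto (fun n => d (u n) x) l (𝓝 0)) :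
    Tendsto u l (@nhds X (tauD d) x) := by
  let _ := tauD d
  intro U hU
  obtain ⟨V, hVU, hV, hxV⟩ := mem_nhds_iff.mp hU
  obtain ⟨r, hr, hball⟩ := hV x hxV
  have hclose : ∀ᶠ n in l, d (u n) x < r := hu.eventually_lt_const hr
  exact hclose.mono fun n hn => hVU (hball (show d x (u n) < r by rwa [hd.symm]))

theorem exists_subseq_tendsto_dist (hd : IsSemimetric d) {z : ℕ → X} {c : X} {F : Set X}
    (hz : Tendsto z atTop (@nhds X (tauD d) c)) (hF : IsClosed[tauD d] F) (hcF : c ∉ F)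
    (hzc : ∀ k, z k ≠ c) :
    ∃ a ∉ F, ∃ φ : ℕ → ℕ, StrictMono φ ∧ Tendsto (fun k => d (z (φ k)) a) atTop (𝓝 0) := by
  let _ := tauD d
  have := hd.t1Space_tauD
  have hnotOpen : ¬ IsOpen (F ∪ range z)ᶜ := fun hO => by
    obtain ⟨k, hk⟩ := (hz.eventually (hO.mem_nhds (by simp [hcF, hzc]))).exists
    exact hk (Or.inr (mem_range_self k))
  obtain ⟨a, ha, hadh⟩ : ∃ a ∉ F ∪ range z, ∀ r > 0, ∃ q ∈ F ∪ range z, d a q < r := by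
    contrapose! hnotOpen
    intro a ha
    obtain ⟨r, hr, h⟩ := hnotOpen a ha
    exact ⟨r, hr, fun q hq hqS => (h q hqS).not_gt hq⟩
  have hfreq : ∀ r > 0, ∃ᶠ k in atTop, d (z k) a < r := by
    refine fun r hr => frequently_atTop.mpr fun K => ?_
    have hC : IsClosed (F ∪ z '' Iio K) := hF.union ((finite_Iio K).image z).isClosed
    obtain ⟨r₀, hr₀, hball⟩ :=
      hC.isOpen_compl a fun h => ha (h.imp id fun h' => image_subset_range _ _ h')
    obtain ⟨q, hq, hdq⟩ := hadh (min r r₀) (lt_min hr hr₀)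
    have hqC : q ∉ F ∪ z '' Iio K := hball (lt_of_lt_of_le hdq (min_le_right _ _))
    obtain ⟨k, rfl⟩ := hq.resolve_left fun h => hqC (Or.inl h)
    refine ⟨k, not_lt.mp fun hk => hqC (Or.inr (mem_image_of_mem z hk)), ?_⟩
    rw [hd.symm]
    exact lt_of_lt_of_le hdq (min_le_left _ _)
  obtain ⟨φ, hφ, hφa⟩ :=
    extraction_forall_of_frequently fun n => hfreq (1 / (n + 1 : ℝ)) Nat.one_div_pos_of_nat
  refine ⟨a, fun h => ha (Or.inl h), φ, hφ, ?_⟩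
  exact squeeze_zero (fun k => hd.nonneg _ _) (fun k => (hφa k).le)
    tendsto_one_div_add_atTop_nhds_zero_nat

theorem ball_mem_nhds_tauD (hd : IsSemimetric d) (H : SeqLimitsUnique d)
    [@FirstCountableTopology X (tauD d)] (x : X) {r : ℝ} (hr : 0 < r) :
    {y | d x y < r} ∈ @nhds X (tauD d) x := by
  let _ := tauD d
  have := hd.t1Space_tauD
  by_contra hB
  have hxcl : x ∈ closure {y | d x y < r}ᶜ := by
    rw [closure_compl]
    exact mt mem_interior_iff_mem_nhds.mp hB
  obtain ⟨z, hzB, hz⟩ := mem_closure_iff_seq_limit.mp hxcl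
  have hzx : ∀ k, z k ≠ x := fun k h => hzB k (by simp [h, (hd.eq_iff x x).mpr rfl, hr])
  obtain ⟨a, -, φ, hφ, ha⟩ := hd.exists_subseq_tendsto_dist hz isClosed_empty (notMem_empty x) hzx
  have hax : a ≠ x := by
    rintro rfl
    obtain ⟨k, hk⟩ := (ha.eventually_lt_const hr).exists
    exact hzB (φ k) (by rwa [mem_ofPred_eq, hd.symm])
  obtain ⟨b, hba, ψ, hψ, hb⟩ := hd.exists_subseq_tendsto_dist (hz.comp hφ.tendsto_atTop)
    isClosed_singleton hax.symm fun k => hzx (φ k)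
  exact hba (H b a _ hb (ha.comp hψ.tendsto_atTop))

theorem tendsto_dist_of_tendsto_tauD {ι : Type*} {l : Filter ι} (hd : IsSemimetric d)
    (H : SeqLimitsUnique d) [@FirstCountableTopology X (tauD d)] {u : ι → X} {x : X}
    (hu : Tendsto u l (@nhds X (tauD d) x)) : Tendsto (fun n => d (u n) x) l (𝓝 0) := by
  refine tendsto_order.mpr ⟨fun s hs => .of_forall fun n => hs.trans_le (hd.nonneg _ _),
    fun r hr => ?_⟩
  filter_upwards [hu (hd.ball_mem_nhds_tauD H x hr)] with n hn
  rwa [hd.symm]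

end IsSemimetric

theorem stmt_1 {X : Type*} (d : X → X → ℝ) (hd : IsSemimetric d)
    (hfc : @FirstCountableTopology X (tauD d)) :
    (∀ (x y : X) (xs : ℕ → X),
        Tendsto (fun n => d (xs n) x) atTop (𝓝 0) →
        Tendsto (fun n => d (xs n) y) atTop (𝓝 0) → x = y) ↔
      @T2Space X (tauD d) := by
  let _ := tauD d
  constructor
  · refine fun H => t2_iff_nhds.mpr fun {x y} _ => ?_
    obtain ⟨u, hu⟩ := (𝓝 x ⊓ 𝓝 y).exists_seq_tendsto
    exact H x y u (hd.tendsto_dist_of_tendsto_tauD H (hu.mono_right inf_le_left))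
      (hd.tendsto_dist_of_tendsto_tauD H (hu.mono_right inf_le_right))
  · exact fun _ x y xs hx hy =>
      tendsto_nhds_unique (hd.tendsto_tauD_of_tendsto_dist hx) (hd.tendsto_tauD_of_tendsto_dist hy)
end

section
/- Let (X,d), (Y,ρ) be semimetric spaces and f: X→Y satisfy φ₁(d(x,y)) ≤ ρ(f(x),f(y)) ≤ φ₂(d(x,y)) for all x,y∈X, where φ₁,φ₂:[0,∞)→[0,∞) satisfy φ₁(0)=φ₂(0)=0, φ₁≤φ₂ pointwise, φ₂ is nondecreasing, φ₂(uv) ≤ C·φ₂(u)·φ₂(v) for some C>0, φ₂(t) ≤ K·φ₁(t) for some K≥1, and φ₁ is a homeomorphism of [0,∞). Then f is an η-quasisymmetric mapping with η(t) = C·K²·φ₁(t). -/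
open Set Filter Topology

theorem IsQSHomeo.const_mul {η : ℝ → ℝ} (hη : IsQSHomeo η) {c : ℝ} (hc : 0 < c) :
    IsQSHomeo (fun t => c * η t) where
  maps t ht := mul_nonneg hc.le (hη.maps t ht)
  zero := by simp [hη.zero]
  strictMonoOn _ ha _ hb hab := mul_lt_mul_of_pos_left (hη.strictMonoOn ha hb hab) hc
  surjOn s hs := by
    obtain ⟨t, ht, hts⟩ := hη.surjOn (s / c) (div_nonneg hs hc.le)
    exact ⟨t, ht, by rw [hts]; field_simp⟩
  continuousOn := continuousOn_const.mul hη.continuousOn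

theorem apply_le_of_le_mul_of_submultiplicative {φ₁ φ₂ : ℝ → ℝ} {C K : ℝ} (hC : 0 ≤ C)
    (hφ₂ : ∀ t, 0 ≤ t → 0 ≤ φ₂ t)
    (hmono : ∀ s t, 0 ≤ s → s ≤ t → φ₂ s ≤ φ₂ t)
    (hsub : ∀ u v, 0 ≤ u → 0 ≤ v → φ₂ (u * v) ≤ C * φ₂ u * φ₂ v)
    (hK2 : ∀ t, 0 ≤ t → φ₂ t ≤ K * φ₁ t)
    {s t r : ℝ} (hs : 0 ≤ s) (ht : 0 ≤ t) (hr : 0 ≤ r) (hstr : s ≤ t * r) :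
    φ₂ s ≤ C * K * φ₁ t * φ₂ r :=
  calc φ₂ s ≤ φ₂ (t * r) := hmono _ _ hs hstr
    _ ≤ C * φ₂ t * φ₂ r := hsub t r ht hr
    _ ≤ C * (K * φ₁ t) * φ₂ r := by gcongr; exacts [hφ₂ r hr, hK2 t ht]
    _ = C * K * φ₁ t * φ₂ r := by ring

theorem stmt_4_general {X Y : Type*} (d : X → X → ℝ) (ρ : Y → Y → ℝ) (f : X → Y)
    (φ₁ φ₂ : ℝ → ℝ) (C K : ℝ)
    (hd : IsSemimetric d)
    (hC : 0 < C) (hK : 1 ≤ K)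
    (hle : ∀ t, 0 ≤ t → φ₁ t ≤ φ₂ t)
    (hmono : ∀ s t, 0 ≤ s → s ≤ t → φ₂ s ≤ φ₂ t)
    (hsub : ∀ u v, 0 ≤ u → 0 ≤ v → φ₂ (u * v) ≤ C * φ₂ u * φ₂ v)
    (hK2 : ∀ t, 0 ≤ t → φ₂ t ≤ K * φ₁ t)
    (hhomeo : IsQSHomeo φ₁)
    (hbound : ∀ x y : X, φ₁ (d x y) ≤ ρ (f x) (f y) ∧ ρ (f x) (f y) ≤ φ₂ (d x y)) :
    IsQuasisymmetric d ρ (fun t => C * K ^ 2 * φ₁ t) f := by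
  have hφ₂ : ∀ t, 0 ≤ t → 0 ≤ φ₂ t := fun t ht => (hhomeo.maps t ht).trans (hle t ht)
  refine ⟨hhomeo.const_mul (by positivity), fun x a b t ht hab => ?_⟩
  have hCKφ : 0 ≤ C * K * φ₁ t := mul_nonneg (by positivity) (hhomeo.maps t ht.le)
  have hb : φ₂ (d x b) ≤ K * ρ (f x) (f b) :=
    (hK2 _ (hd.nonneg x b)).trans (mul_le_mul_of_nonneg_left (hbound x b).1 (by linarith))
  calc ρ (f x) (f a) ≤ φ₂ (d x a) := (hbound x a).2
    _ ≤ C * K * φ₁ t * φ₂ (d x b) :=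
      apply_le_of_le_mul_of_submultiplicative hC.le hφ₂ hmono hsub hK2
        (hd.nonneg x a) ht.le (hd.nonneg x b) hab
    _ ≤ C * K * φ₁ t * (K * ρ (f x) (f b)) := by gcongr
    _ = C * K ^ 2 * φ₁ t * ρ (f x) (f b) := by ring

theorem stmt_4 {X Y : Type*} (d : X → X → ℝ) (ρ : Y → Y → ℝ) (f : X → Y)
    (φ₁ φ₂ : ℝ → ℝ) (C K : ℝ)
    (hd : IsSemimetric d) (hρ : IsSemimetric ρ)
    (hC : 0 < C) (hK : 1 ≤ K)
    (h10 : φ₁ 0 = 0) (h20 : φ₂ 0 = 0)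
    (hle : ∀ t, 0 ≤ t → φ₁ t ≤ φ₂ t)
    (hmono : ∀ s t, 0 ≤ s → s ≤ t → φ₂ s ≤ φ₂ t)
    (hsub : ∀ u v, 0 ≤ u → 0 ≤ v → φ₂ (u * v) ≤ C * φ₂ u * φ₂ v)
    (hK2 : ∀ t, 0 ≤ t → φ₂ t ≤ K * φ₁ t)
    (hhomeo : IsQSHomeo φ₁)
    (hbound : ∀ x y : X, φ₁ (d x y) ≤ ρ (f x) (f y) ∧ ρ (f x) (f y) ≤ φ₂ (d x y)) :
    IsQuasisymmetric d ρ (fun t => C * K ^ 2 * φ₁ t) f :=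
  stmt_4_general d ρ f φ₁ φ₂ C K hd hC hK hle hmono hsub hK2 hhomeo hbound
end

section
/- Let (X,d) be a semimetric space with triangle function Φ₁, (Y,ρ) a semimetric space, and f: X→Y a surjective η-quasisymmetric mapping. Suppose Φ₂:[0,∞)²→[0,∞) is symmetric, monotone increasing in both arguments with Φ₂(0,0)=0; λ·Φ₁(x,y) ≤ Φ₁(λx,λy) and Φ₂(λx,λy) ≤ λ·Φ₂(x,y) for all λ>0; for all t₁,t₂>0, 1 ≤ Φ₁(1/t₁,1/t₂) implies 1 ≤ Φ₂(1/η(t₁),1/η(t₂)); and a ≤ Φ₂(a,0) for a>0. Then Φ₂ is a triangle function for (Y,ρ), i.e., ρ(x',y') ≤ Φ₂(ρ(x',z'),ρ(z',y')) for all x',y',z'∈Y. -/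
open Set Filter Topology

theorem stmt_6 {X Y : Type*} (d : X → X → ℝ) (ρ : Y → Y → ℝ) (η : ℝ → ℝ) (f : X → Y)
    (Φ₁ Φ₂ : ℝ → ℝ → ℝ)
    (hd : IsSemimetric d) (hρ : IsSemimetric ρ)
    (hT1 : IsTriangleFunction d Φ₁)
    (hsurj : Function.Surjective f)
    (hq : IsQuasisymmetric d ρ η f)
    (hsymm2 : ∀ u v, Φ₂ u v = Φ₂ v u)
    (hmono2 : ∀ u u' v v', 0 ≤ u → u ≤ u' → 0 ≤ v → v ≤ v' → Φ₂ u v ≤ Φ₂ u' v')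
    (hzero2 : Φ₂ 0 0 = 0)
    (hlam1 : ∀ lam x y : ℝ, 0 < lam → 0 ≤ x → 0 ≤ y → lam * Φ₁ x y ≤ Φ₁ (lam * x) (lam * y))
    (hlam2 : ∀ lam x y : ℝ, 0 < lam → 0 ≤ x → 0 ≤ y → Φ₂ (lam * x) (lam * y) ≤ lam * Φ₂ x y)
    (himp : ∀ t₁ t₂ : ℝ, 0 < t₁ → 0 < t₂ →
      1 ≤ Φ₁ (1 / t₁) (1 / t₂) → 1 ≤ Φ₂ (1 / η t₁) (1 / η t₂))
    (hiv : ∀ a : ℝ, 0 < a → a ≤ Φ₂ a 0) :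
    ∀ x' y' z' : Y, ρ x' y' ≤ Φ₂ (ρ x' z') (ρ z' y') := by

  obtain ⟨hη, hqs⟩ := hq
  have hΦ₂nn : ∀ a b : ℝ, 0 ≤ a → 0 ≤ b → 0 ≤ Φ₂ a b := by
    intro a b ha hb
    have := hmono2 0 a 0 b le_rfl ha le_rfl hb
    rwa [hzero2] at this
  intro x' y' z'
  obtain ⟨x, rfl⟩ := hsurj x'
  obtain ⟨y, rfl⟩ := hsurj y'
  obtain ⟨z, rfl⟩ := hsurj z'
  by_cases h0 : ρ (f x) (f y) = 0
  · rw [h0]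
    exact hΦ₂nn _ _ (hρ.nonneg _ _) (hρ.nonneg _ _)
  have hr : 0 < ρ (f x) (f y) := lt_of_le_of_ne (hρ.nonneg _ _) (Ne.symm h0)
  by_cases hxz : ρ (f x) (f z) = 0
  · have hfe : f x = f z := (hρ.eq_iff _ _).1 hxz
    rw [hxz, hfe]
    rw [hfe] at hr
    calc ρ (f z) (f y) ≤ Φ₂ (ρ (f z) (f y)) 0 := hiv _ hr
      _ = Φ₂ 0 (ρ (f z) (f y)) := hsymm2 _ _
  by_cases hzy : ρ (f z) (f y) = 0
  · have hfe : f z = f y := (hρ.eq_iff _ _).1 hzy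
    rw [hzy, ← hfe]
    rw [← hfe] at hr
    exact hiv _ hr
  have hρxz : 0 < ρ (f x) (f z) := lt_of_le_of_ne (hρ.nonneg _ _) (Ne.symm hxz)
  have hρzy : 0 < ρ (f z) (f y) := lt_of_le_of_ne (hρ.nonneg _ _) (Ne.symm hzy)
  -- distances in X are positive
  have hdxy : 0 < d x y := by
    refine lt_of_le_of_ne (hd.nonneg x y) (Ne.symm fun h => ?_)
    have hxy : x = y := (hd.eq_iff x y).1 h
    rw [hxy, (hρ.eq_iff (f y) (f y)).2 rfl] at hr
    exact lt_irrefl 0 hr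
  have hdxz : 0 < d x z := by
    refine lt_of_le_of_ne (hd.nonneg x z) (Ne.symm fun h => ?_)
    have hxy : x = z := (hd.eq_iff x z).1 h
    rw [hxy, (hρ.eq_iff (f z) (f z)).2 rfl] at hρxz
    exact lt_irrefl 0 hρxz
  have hdyz : 0 < d y z := by
    refine lt_of_le_of_ne (hd.nonneg y z) (Ne.symm fun h => ?_)
    have hxy : y = z := (hd.eq_iff y z).1 h
    rw [hxy, (hρ.eq_iff (f z) (f z)).2 rfl] at hρzy
    exact lt_irrefl 0 hρzy
  set t₁ : ℝ := d x y / d x z with ht₁def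
  set t₂ : ℝ := d x y / d y z with ht₂def
  have ht₁ : 0 < t₁ := div_pos hdxy hdxz
  have ht₂ : 0 < t₂ := div_pos hdxy hdyz
  -- Step 1 : 1 ≤ Φ₁ (1/t₁) (1/t₂)
  have hstep1 : 1 ≤ Φ₁ (1 / t₁) (1 / t₂) := by
    have h1 : (1 / d x y) * Φ₁ (d x z) (d y z) ≤
        Φ₁ ((1 / d x y) * d x z) ((1 / d x y) * d y z) :=
      hlam1 _ _ _ (by positivity) hdxz.le hdyz.le
    have h2 : d x y ≤ Φ₁ (d x z) (d y z) := hT1.tri x y z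
    have h3 : 1 ≤ (1 / d x y) * Φ₁ (d x z) (d y z) := by
      rw [one_div, inv_mul_eq_div, le_div_iff₀ hdxy, one_mul]
      exact h2
    have h4 : 1 / t₁ = (1 / d x y) * d x z := by
      field_simp [ht₁def]
      rw [ht₁def, div_mul_cancel₀ _ hdxz.ne']
    have h5 : 1 / t₂ = (1 / d x y) * d y z := by
      field_simp [ht₂def]
      rw [ht₂def, div_mul_cancel₀ _ hdyz.ne']
    rw [h4, h5]
    exact h3.trans h1
  have hstep2 : 1 ≤ Φ₂ (1 / η t₁) (1 / η t₂) := himp t₁ t₂ ht₁ ht₂ hstep1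
  -- η values positive
  have hηpos : ∀ t : ℝ, 0 < t → 0 < η t := by
    intro t ht
    have := hη.strictMonoOn (Set.self_mem_Ici) (Set.mem_Ici.2 ht.le) ht
    rwa [hη.zero] at this
  have hηt₁ : 0 < η t₁ := hηpos t₁ ht₁
  have hηt₂ : 0 < η t₂ := hηpos t₂ ht₂
  -- quasisymmetry bounds
  have hq1 : ρ (f x) (f y) ≤ η t₁ * ρ (f x) (f z) := by
    apply hqs x y z t₁ ht₁
    rw [ht₁def, div_mul_cancel₀ _ hdxz.ne']
  have hq2 : ρ (f x) (f y) ≤ η t₂ * ρ (f z) (f y) := by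
    have := hqs y x z t₂ ht₂ (by
      rw [hd.symm y x, ht₂def, div_mul_cancel₀ _ hdyz.ne'])
    rwa [hρ.symm (f y) (f x), hρ.symm (f y) (f z)] at this
  -- 1/η t₁ ≤ ρxz / r etc.
  set r : ℝ := ρ (f x) (f y) with hrdef
  have hb1 : 1 / η t₁ ≤ (1 / r) * ρ (f x) (f z) := by
    have h : 1 / η t₁ ≤ ρ (f x) (f z) / r :=
      (div_le_div_iff₀ hηt₁ hr).2 (by nlinarith)
    exact h.trans_eq (by ring)
  have hb2 : 1 / η t₂ ≤ (1 / r) * ρ (f z) (f y) := by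
    have h : 1 / η t₂ ≤ ρ (f z) (f y) / r :=
      (div_le_div_iff₀ hηt₂ hr).2 (by nlinarith)
    exact h.trans_eq (by ring)
  have hmono : Φ₂ (1 / η t₁) (1 / η t₂) ≤
      Φ₂ ((1 / r) * ρ (f x) (f z)) ((1 / r) * ρ (f z) (f y)) :=
    hmono2 _ _ _ _ (by positivity) hb1 (by positivity) hb2
  have hhom : Φ₂ ((1 / r) * ρ (f x) (f z)) ((1 / r) * ρ (f z) (f y)) ≤
      (1 / r) * Φ₂ (ρ (f x) (f z)) (ρ (f z) (f y)) :=
    hlam2 _ _ _ (by positivity) hρxz.le hρzy.le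
  have : 1 ≤ (1 / r) * Φ₂ (ρ (f x) (f z)) (ρ (f z) (f y)) :=
    hstep2.trans (hmono.trans hhom)
  rw [one_div, inv_mul_eq_div, le_div_iff₀ hr, one_mul] at this
  exact this
end

section
/- Let (X,d) be a b-metric space with coefficient K₁, (Y,ρ) a semimetric space, and f: X→Y a surjective η-quasisymmetric mapping. If there exists K₂≥1 such that for all t₁,t₂>0, 1 ≤ K₁(1/t₁ + 1/t₂) implies 1 ≤ K₂(1/η(t₁) + 1/η(t₂)), then ρ is a b-metric on Y with coefficient K₂, i.e., ρ(x,y) ≤ K₂(ρ(x,z)+ρ(z,y)) for all x,y,z∈Y. -/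
open Set Filter Topology

theorem stmt_7 {X Y : Type*} (d : X → X → ℝ) (ρ : Y → Y → ℝ) (η : ℝ → ℝ) (f : X → Y)
    (K₁ K₂ : ℝ)
    (hd : IsSemimetric d) (hρ : IsSemimetric ρ)
    (hK₁ : 1 ≤ K₁) (hK₂ : 1 ≤ K₂)
    (hb : ∀ x y z : X, d x y ≤ K₁ * (d x z + d z y))
    (hsurj : Function.Surjective f)
    (hq : IsQuasisymmetric d ρ η f)
    (himp : ∀ t₁ t₂ : ℝ, 0 < t₁ → 0 < t₂ →
      1 ≤ K₁ * (1 / t₁ + 1 / t₂) → 1 ≤ K₂ * (1 / η t₁ + 1 / η t₂)) :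
    ∀ x y z : Y, ρ x y ≤ K₂ * (ρ x z + ρ z y) := by
  intro y₁ y₂ y₃
  obtain ⟨a, rfl⟩ := hsurj y₁
  obtain ⟨b, rfl⟩ := hsurj y₂
  obtain ⟨c, rfl⟩ := hsurj y₃
  obtain ⟨hη, hqs⟩ := hq
  have hρ1 := hρ.nonneg (f a) (f c)
  have hρ2 := hρ.nonneg (f c) (f b)
  have hρ3 := hρ.nonneg (f a) (f b)
  by_cases hw : ρ (f a) (f b) ≤ 0
  · nlinarith
  push_neg at hw
  by_cases hac : a = c
  · subst hac
    have : ρ (f a) (f a) = 0 := (hρ.eq_iff _ _).mpr rfl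
    nlinarith
  by_cases hcb : c = b
  · subst hcb
    have : ρ (f c) (f c) = 0 := (hρ.eq_iff _ _).mpr rfl
    have := hρ.symm (f a) (f c)
    nlinarith
  have hab : a ≠ b := by
    rintro rfl
    rw [(hρ.eq_iff _ _).mpr rfl] at hw; exact lt_irrefl 0 hw
  have hu : 0 < d a c :=
    lt_of_le_of_ne (hd.nonneg a c) fun h => hac ((hd.eq_iff a c).mp h.symm)
  have hv : 0 < d c b :=
    lt_of_le_of_ne (hd.nonneg c b) fun h => hcb ((hd.eq_iff c b).mp h.symm)
  have hwd : 0 < d a b :=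
    lt_of_le_of_ne (hd.nonneg a b) fun h => hab ((hd.eq_iff a b).mp h.symm)
  set t₁ := d a b / d a c with ht₁def
  set t₂ := d a b / d c b with ht₂def
  have ht₁ : 0 < t₁ := div_pos hwd hu
  have ht₂ : 0 < t₂ := div_pos hwd hv
  have hη₁ : 0 < η t₁ := by
    have := hη.strictMonoOn (Set.self_mem_Ici) (Set.mem_Ici.mpr ht₁.le) ht₁
    rwa [hη.zero] at this
  have hη₂ : 0 < η t₂ := by
    have := hη.strictMonoOn (Set.self_mem_Ici) (Set.mem_Ici.mpr ht₂.le) ht₂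
    rwa [hη.zero] at this
  -- quasisymmetry with center a
  have q1 : ρ (f a) (f b) ≤ η t₁ * ρ (f a) (f c) := by
    apply hqs a b c t₁ ht₁
    rw [ht₁def, div_mul_eq_mul_div, le_div_iff₀ hu]
  -- quasisymmetry with center b
  have q2 : ρ (f b) (f a) ≤ η t₂ * ρ (f b) (f c) := by
    apply hqs b a c t₂ ht₂
    rw [hd.symm b a, hd.symm b c, ht₂def, div_mul_eq_mul_div, le_div_iff₀ hv]
  rw [hρ.symm (f b) (f a), hρ.symm (f b) (f c)] at q2
  have hK : 1 ≤ K₂ * (1 / η t₁ + 1 / η t₂) := by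
    apply himp t₁ t₂ ht₁ ht₂
    have := hb a b c
    rw [ht₁def, ht₂def, one_div_div, one_div_div, ← add_div, ← mul_div_assoc,
      le_div_iff₀ hwd, one_mul]
    exact this
  -- combine
  have e1 : ρ (f a) (f b) / η t₁ ≤ ρ (f a) (f c) := by
    rw [div_le_iff₀ hη₁]; linarith [mul_comm (η t₁) (ρ (f a) (f c))]
  have e2 : ρ (f a) (f b) / η t₂ ≤ ρ (f c) (f b) := by
    rw [div_le_iff₀ hη₂]; linarith [mul_comm (η t₂) (ρ (f c) (f b))]
  have hK₂pos : 0 < K₂ := lt_of_lt_of_le one_pos hK₂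
  calc ρ (f a) (f b) = ρ (f a) (f b) * 1 := (mul_one _).symm
    _ ≤ ρ (f a) (f b) * (K₂ * (1 / η t₁ + 1 / η t₂)) := by
        exact mul_le_mul_of_nonneg_left hK hρ3
    _ = K₂ * (ρ (f a) (f b) / η t₁ + ρ (f a) (f b) / η t₂) := by ring
    _ ≤ K₂ * (ρ (f a) (f c) + ρ (f c) (f b)) := by nlinarith
end

section
/- Let (X,d) be an ultrametric space, (Y,ρ) a semimetric space, and f: X→Y a surjective η-quasisymmetric mapping with η(1)=1. Then (Y,ρ) satisfies the strong triangle inequality: ρ(x,y) ≤ max{ρ(x,z), ρ(z,y)} for all x,y,z∈Y. -/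
/-!
For `η 1 = 1`, quasisymmetry says that `f` preserves the order of two distances measured from a
common point. Up to symmetry, the ultrametric inequality `d a b ≤ max (d a c) (d c b)` is such a
comparison, so it transfers along `f`, and surjectivity covers every triple of `Y`.
-/

open Set Filter Topology

theorem IsQuasisymmetric.le_of_le {X Y : Type*} {d : X → X → ℝ} {ρ : Y → Y → ℝ} {η : ℝ → ℝ}
    {f : X → Y} (hq : IsQuasisymmetric d ρ η f) (hη1 : η 1 = 1) {x a b : X}
    (h : d x a ≤ d x b) : ρ (f x) (f a) ≤ ρ (f x) (f b) := by
  simpa [hη1] using hq.2 x a b 1 one_pos (by simpa using h)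

theorem IsQuasisymmetric.le_max_of_ultrametric {X Y : Type*} {d : X → X → ℝ} {ρ : Y → Y → ℝ}
    {η : ℝ → ℝ} {f : X → Y} (hq : IsQuasisymmetric d ρ η f) (hη1 : η 1 = 1)
    (hd : ∀ x y, d x y = d y x) (hρ : ∀ x y, ρ x y = ρ y x)
    (hultra : ∀ x y z : X, d x y ≤ max (d x z) (d z y)) (a b c : X) :
    ρ (f a) (f b) ≤ max (ρ (f a) (f c)) (ρ (f c) (f b)) := by
  rcases le_max_iff.1 (hultra a b c) with hac | hcb
  · exact le_max_of_le_left (hq.le_of_le hη1 hac)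
  · rw [hd a b, hd c b] at hcb
    rw [hρ (f a), hρ (f c)]
    exact le_max_of_le_right (hq.le_of_le hη1 hcb)

theorem stmt_8 {X Y : Type*} (d : X → X → ℝ) (ρ : Y → Y → ℝ) (η : ℝ → ℝ) (f : X → Y)
    (hd : IsSemimetric d) (hρ : IsSemimetric ρ)
    (hultra : ∀ x y z : X, d x y ≤ max (d x z) (d z y))
    (hsurj : Function.Surjective f)
    (hq : IsQuasisymmetric d ρ η f)
    (hη1 : η 1 = 1) :
    ∀ x y z : Y, ρ x y ≤ max (ρ x z) (ρ z y) := by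
  intro x y z
  obtain ⟨a, rfl⟩ := hsurj x
  obtain ⟨b, rfl⟩ := hsurj y
  obtain ⟨c, rfl⟩ := hsurj z
  exact hq.le_max_of_ultrametric hη1 hd.symm hρ.symm hultra a b c
end

section
/- Let (X,d) be a Ptolemaic semimetric space, (Y,ρ) a semimetric space, and f: X→Y a surjective η-quasisymmetric mapping. If for all t₁,t₂,t₃,t₄>0 the inequality t₁t₂t₃t₄ ≤ t₁t₂ + t₃t₄ implies η(t₁)η(t₂)η(t₃)η(t₄) ≤ η(t₁)η(t₂) + η(t₃)η(t₄), then (Y,ρ) is Ptolemaic. -/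
open Set Filter Topology

/-!
Take four points `a, b, c, e` of `X`, write `L = d(a,c) d(e,b)`, `A = d(a,b) d(e,c)`,
`B = d(a,e) d(b,c)`, and set `p = L / A = t₁ t₂`, `q = L / B = t₃ t₄` with the ratios
`t₁ = d(a,c)/d(a,b)`, `t₂ = d(e,b)/d(e,c)`, `t₃ = d(a,c)/d(a,e)`, `t₄ = d(e,b)/d(b,c)`.
Ptolemy's inequality `L ≤ A + B` in `X` is equivalent to `p q ≤ p + q`, so the hypothesis on `η`
gives `P Q ≤ P + Q` for `P = η(t₁) η(t₂)` and `Q = η(t₃) η(t₄)`. If `L', A', B'` are the same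
products of `ρ`-distances between the images, quasisymmetry gives `L' ≤ P A'` and `L' ≤ Q B'`,
and together with `P Q ≤ P + Q` these yield `L' ≤ A' + B'`. When two of the image points
coincide, Ptolemy's inequality holds in any semimetric space.
-/

lemma div_mul_div_le_div_add_div {L A B : ℝ} (hL : 0 < L) (hA : 0 < A) (hB : 0 < B)
    (h : L ≤ A + B) : L / A * (L / B) ≤ L / A + L / B := by
  rw [div_mul_div_comm, div_add_div _ _ hA.ne' hB.ne', div_le_div_iff₀ (by positivity) (by positivity)]
  have : L * L * (A * B) ≤ (A + B) * L * (A * B) := by gcongr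
  linarith

lemma le_add_of_le_mul_of_le_mul {L A B P Q : ℝ} (hL : 0 ≤ L) (hP : 0 < P) (hQ : 0 < Q)
    (hPQ : P * Q ≤ P + Q) (hLA : L ≤ P * A) (hLB : L ≤ Q * B) : L ≤ A + B := by
  refine le_of_mul_le_mul_left ?_ (mul_pos hP hQ)
  calc P * Q * L ≤ (P + Q) * L := by gcongr
    _ = P * L + Q * L := add_mul P Q L
    _ ≤ P * (Q * B) + Q * (P * A) := by gcongr
    _ = P * Q * (A + B) := by ring

namespace IsSemimetric

variable {X : Type*} {d : X → X → ℝ}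

lemma pos_of_ne (hd : IsSemimetric d) {x y : X} (h : x ≠ y) : 0 < d x y :=
  (hd.nonneg x y).lt_of_ne' fun h0 => h ((hd.eq_iff x y).mp h0)

lemma self (hd : IsSemimetric d) (x : X) : d x x = 0 := (hd.eq_iff x x).mpr rfl

lemma ptolemy_of_not_pairwise_ne (hd : IsSemimetric d) {x y z t : X}
    (h : x = y ∨ x = z ∨ x = t ∨ y = z ∨ y = t ∨ z = t) :
    d x z * d t y ≤ d x y * d t z + d x t * d y z := by
  have hprod := mul_nonneg (hd.nonneg x y) (hd.nonneg t z)
  have hprod' := mul_nonneg (hd.nonneg x t) (hd.nonneg y z)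
  rcases h with rfl | rfl | rfl | rfl | rfl | rfl
  · rw [hd.symm t x]; linarith [mul_comm (d x z) (d x t)]
  · simp only [hd.self, zero_mul]; positivity
  · linarith
  · linarith
  · simp only [hd.self, mul_zero]; positivity
  · rw [hd.symm y z]; linarith

end IsSemimetric

lemma IsQSHomeo.pos {η : ℝ → ℝ} (hη : IsQSHomeo η) {t : ℝ} (ht : 0 < t) : 0 < η t :=
  hη.zero ▸ hη.strictMonoOn Set.self_mem_Ici (Set.mem_Ici.mpr ht.le) ht

lemma IsQuasisymmetric.le_eta_div_mul {X Y : Type*} {d : X → X → ℝ} {ρ : Y → Y → ℝ}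
    {η : ℝ → ℝ} {f : X → Y} (hq : IsQuasisymmetric d ρ η f) {x a b : X}
    (ha : 0 < d x a) (hb : 0 < d x b) :
    ρ (f x) (f a) ≤ η (d x a / d x b) * ρ (f x) (f b) :=
  hq.2 x a b _ (div_pos ha hb) (div_mul_cancel₀ _ hb.ne').ge

def PreservesPtolemyProducts (η : ℝ → ℝ) : Prop :=
  ∀ t₁ t₂ t₃ t₄ : ℝ, 0 < t₁ → 0 < t₂ → 0 < t₃ → 0 < t₄ →
    t₁ * t₂ * t₃ * t₄ ≤ t₁ * t₂ + t₃ * t₄ →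
    η t₁ * η t₂ * η t₃ * η t₄ ≤ η t₁ * η t₂ + η t₃ * η t₄

lemma IsQuasisymmetric.ptolemy_of_pairwise_ne {X Y : Type*} {d : X → X → ℝ} {ρ : Y → Y → ℝ}
    {η : ℝ → ℝ} {f : X → Y} (hd : IsSemimetric d) (hρ : IsSemimetric ρ) (hptol : IsPtolemaic d)
    (hq : IsQuasisymmetric d ρ η f)
    (himp : PreservesPtolemyProducts η) {a b c e : X} (hab : a ≠ b) (hac : a ≠ c) (hae : a ≠ e) (hbc : b ≠ c) (hbe : b ≠ e)
    (hce : c ≠ e) :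
    ρ (f a) (f c) * ρ (f e) (f b) ≤ ρ (f a) (f b) * ρ (f e) (f c) + ρ (f a) (f e) * ρ (f b) (f c) := by
  have hdab := hd.pos_of_ne hab
  have hdac := hd.pos_of_ne hac
  have hdae := hd.pos_of_ne hae
  have hdbc := hd.pos_of_ne hbc
  have hdeb := hd.pos_of_ne hbe.symm
  have hdec := hd.pos_of_ne hce.symm
  have hdbe : d b e = d e b := hd.symm b e
  have hX : d a c / d a b * (d e b / d e c) * (d a c / d a e) * (d e b / d b c) ≤
      d a c / d a b * (d e b / d e c) + d a c / d a e * (d e b / d b c) := by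
    rw [mul_assoc _ (d a c / d a e), div_mul_div_comm (d a c) (d a b) (d e b) (d e c),
      div_mul_div_comm (d a c) (d a e) (d e b) (d b c)]
    exact div_mul_div_le_div_add_div (by positivity) (by positivity) (by positivity) (hptol a b c e)
  have hY := himp _ _ _ _ (div_pos hdac hdab) (div_pos hdeb hdec) (div_pos hdac hdae)
    (div_pos hdeb hdbc) hX
  have hη := hq.1
  refine le_add_of_le_mul_of_le_mul (mul_nonneg (hρ.nonneg _ _) (hρ.nonneg _ _))
    (mul_pos (hη.pos (div_pos hdac hdab)) (hη.pos (div_pos hdeb hdec)))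
    (mul_pos (hη.pos (div_pos hdac hdae)) (hη.pos (div_pos hdeb hdbc)))
    (by rwa [← mul_assoc]) ?_ ?_
  · rw [mul_mul_mul_comm]
    exact mul_le_mul (hq.le_eta_div_mul hdac hdab) (hq.le_eta_div_mul hdeb hdec)
      (hρ.nonneg _ _) (mul_nonneg (hη.maps _ (div_pos hdac hdab).le) (hρ.nonneg _ _))
  · have hbe' : ρ (f e) (f b) ≤ η (d e b / d b c) * ρ (f b) (f c) := by
      have h := hq.le_eta_div_mul (hdbe ▸ hdeb) hdbc
      rwa [hdbe, hρ.symm (f b) (f e)] at h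
    rw [mul_mul_mul_comm]
    exact mul_le_mul (hq.le_eta_div_mul hdac hdae) hbe'
      (hρ.nonneg _ _) (mul_nonneg (hη.maps _ (div_pos hdac hdae).le) (hρ.nonneg _ _))

theorem stmt_9 {X Y : Type*} (d : X → X → ℝ) (ρ : Y → Y → ℝ) (η : ℝ → ℝ) (f : X → Y)
    (hd : IsSemimetric d) (hρ : IsSemimetric ρ)
    (hptol : IsPtolemaic d)
    (hsurj : Function.Surjective f)
    (hq : IsQuasisymmetric d ρ η f)
    (himp : ∀ t₁ t₂ t₃ t₄ : ℝ, 0 < t₁ → 0 < t₂ → 0 < t₃ → 0 < t₄ →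
      t₁ * t₂ * t₃ * t₄ ≤ t₁ * t₂ + t₃ * t₄ →
      η t₁ * η t₂ * η t₃ * η t₄ ≤ η t₁ * η t₂ + η t₃ * η t₄) :
    IsPtolemaic ρ := by
  intro x y z t
  obtain ⟨a, rfl⟩ := hsurj x
  obtain ⟨b, rfl⟩ := hsurj y
  obtain ⟨c, rfl⟩ := hsurj z
  obtain ⟨e, rfl⟩ := hsurj t
  by_cases hcoinc : f a = f b ∨ f a = f c ∨ f a = f e ∨ f b = f c ∨ f b = f e ∨ f c = f e
  · exact hρ.ptolemy_of_not_pairwise_ne hcoinc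
  obtain ⟨hab, hac, hae, hbc, hbe, hce⟩ := by simpa only [not_or] using hcoinc
  exact hq.ptolemy_of_pairwise_ne hd hρ hptol himp (ne_of_apply_ne f hab) (ne_of_apply_ne f hac)
    (ne_of_apply_ne f hae) (ne_of_apply_ne f hbc) (ne_of_apply_ne f hbe) (ne_of_apply_ne f hce)
end

section
/- Let X be a Ptolemaic semimetric space, Y a semimetric space, and f: X→Y a surjective η-quasisymmetric mapping with η(t)=t^α, 0<α≤1. Then Y is also Ptolemaic. -/
open Set Filter Topology

private lemma rpow_subadd {α : ℝ} (hα0 : 0 < α) (hα1 : α ≤ 1) {u v : ℝ}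
    (hu : 0 ≤ u) (hv : 0 ≤ v) : (u + v) ^ α ≤ u ^ α + v ^ α := by
  have h := NNReal.rpow_add_le_add_rpow u.toNNReal v.toNNReal hα0.le hα1
  rw [← Real.toNNReal_add hu hv] at h
  have := NNReal.coe_le_coe.mpr h
  push_cast at this
  rwa [Real.coe_toNNReal _ (by linarith), Real.coe_toNNReal _ hu, Real.coe_toNNReal _ hv] at this

theorem stmt_10 {X Y : Type*} (d : X → X → ℝ) (ρ : Y → Y → ℝ) (f : X → Y) (α : ℝ)
    (hd : IsSemimetric d) (hρ : IsSemimetric ρ)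
    (hptol : IsPtolemaic d)
    (hsurj : Function.Surjective f)
    (hα0 : 0 < α) (hα1 : α ≤ 1)
    (hq : IsQuasisymmetric d ρ (fun t => t ^ α) f) :
    IsPtolemaic ρ := by
  have hQS : ∀ x a b : X, 0 < d x b →
      ρ (f x) (f a) ≤ (d x a / d x b) ^ α * ρ (f x) (f b) := by
    intro x a b hb
    rcases eq_or_lt_of_le (hd.nonneg x a) with h0 | h0
    · have : x = a := (hd.eq_iff x a).mp h0.symm
      subst this
      rw [(hρ.eq_iff _ _).mpr rfl]
      exact mul_nonneg (Real.rpow_nonneg (div_nonneg (hd.nonneg _ _) (hd.nonneg _ _)) α)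
        (hρ.nonneg _ _)
    · have ht : 0 < d x a / d x b := div_pos h0 hb
      exact hq.2 x a b _ ht (by field_simp; exact le_rfl)
  intro x' y' z' t'
  obtain ⟨x, rfl⟩ := hsurj x'
  obtain ⟨y, rfl⟩ := hsurj y'
  obtain ⟨z, rfl⟩ := hsurj z'
  obtain ⟨t, rfl⟩ := hsurj t'
  -- degenerate cases
  rcases eq_or_lt_of_le (hd.nonneg x y) with hC | hC
  · have : x = y := (hd.eq_iff x y).mp hC.symm
    subst this
    rw [(hρ.eq_iff (f x) (f x)).mpr rfl, hρ.symm (f t) (f x)]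
    nlinarith [mul_comm (ρ (f x) (f z)) (ρ (f x) (f t))]
  rcases eq_or_lt_of_le (hd.nonneg t z) with hD | hD
  · have : t = z := (hd.eq_iff t z).mp hD.symm
    subst this
    rw [(hρ.eq_iff (f t) (f t)).mpr rfl, hρ.symm (f y) (f t)]
    nlinarith [mul_comm (ρ (f x) (f t)) (ρ (f t) (f y))]
  rcases eq_or_lt_of_le (hd.nonneg x t) with hE | hE
  · have : x = t := (hd.eq_iff x t).mp hE.symm
    subst this
    rw [(hρ.eq_iff (f x) (f x)).mpr rfl]
    nlinarith [mul_comm (ρ (f x) (f z)) (ρ (f x) (f y))]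
  rcases eq_or_lt_of_le (hd.nonneg y z) with hF | hF
  · have : y = z := (hd.eq_iff y z).mp hF.symm
    subst this
    rw [(hρ.eq_iff (f y) (f y)).mpr rfl]
    nlinarith [mul_comm (ρ (f x) (f y)) (ρ (f t) (f y))]
  have h1 : ρ (f x) (f z) ≤ (d x z / d x y) ^ α * ρ (f x) (f y) := hQS x z y hC
  have h2 : ρ (f t) (f y) ≤ (d t y / d t z) ^ α * ρ (f t) (f z) := hQS t y z hD
  have h3 : ρ (f x) (f y) ≤ (d x y / d x t) ^ α * ρ (f x) (f t) := hQS x y t hE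
  have h4 : ρ (f t) (f z) ≤ (d t z / d y z) ^ α * ρ (f y) (f z) := by
    have hzy : 0 < d z y := by rwa [hd.symm z y]
    have := hQS z t y hzy
    rw [hd.symm z t, hd.symm z y, hρ.symm (f z) (f t), hρ.symm (f z) (f y)] at this
    exact this
  set A := d x z with hA'
  set B := d t y with hB'
  set C := d x y with hC'
  set D := d t z with hD'
  set E := d x t with hE'
  set F := d y z with hF'
  have hAnn : 0 ≤ A := hd.nonneg x z
  have hBnn : 0 ≤ B := hd.nonneg t y
  set P := ρ (f x) (f z) with hP'
  set Q := ρ (f t) (f y) with hQ'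
  set R := ρ (f x) (f y) with hR'
  set S := ρ (f t) (f z) with hS'
  set U := ρ (f x) (f t) with hU'
  set V := ρ (f y) (f z) with hV'
  have hPnn : 0 ≤ P := hρ.nonneg _ _
  have hQnn : 0 ≤ Q := hρ.nonneg _ _
  have hRnn : 0 ≤ R := hρ.nonneg _ _
  have hSnn : 0 ≤ S := hρ.nonneg _ _
  have hUnn : 0 ≤ U := hρ.nonneg _ _
  have hVnn : 0 ≤ V := hρ.nonneg _ _
  have hpt : A * B ≤ C * D + E * F := hptol x y z t
  -- combine ratios
  have e1 : (A / C) ^ α * (B / D) ^ α = (A * B / (C * D)) ^ α := by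
    rw [← Real.mul_rpow (div_nonneg hAnn hC.le) (div_nonneg hBnn hD.le)]
    congr 1
    field_simp
  have e2 : (C / E) ^ α * (D / F) ^ α = (C * D / (E * F)) ^ α := by
    rw [← Real.mul_rpow (div_nonneg hC.le hE.le) (div_nonneg hD.le hF.le)]
    congr 1
    field_simp
  have k1 : P * Q ≤ (A * B / (C * D)) ^ α * (R * S) := by
    calc P * Q ≤ ((A / C) ^ α * R) * ((B / D) ^ α * S) :=
          mul_le_mul h1 h2 hQnn (mul_nonneg (Real.rpow_nonneg (div_nonneg hAnn hC.le) α) hRnn)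
      _ = (A / C) ^ α * (B / D) ^ α * (R * S) := by ring
      _ = _ := by rw [e1]
  have k2 : R * S ≤ (C * D / (E * F)) ^ α * (U * V) := by
    calc R * S ≤ ((C / E) ^ α * U) * ((D / F) ^ α * V) :=
          mul_le_mul h3 h4 hSnn (mul_nonneg (Real.rpow_nonneg (div_nonneg hC.le hE.le) α) hUnn)
      _ = (C / E) ^ α * (D / F) ^ α * (U * V) := by ring
      _ = _ := by rw [e2]
  have k3 : (A * B / (C * D)) ^ α ≤ 1 + (E * F / (C * D)) ^ α := by
    have hsub : (A * B) ^ α ≤ (C * D) ^ α + (E * F) ^ α := by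
      calc (A * B) ^ α ≤ (C * D + E * F) ^ α :=
            Real.rpow_le_rpow (mul_nonneg hAnn hBnn) hpt hα0.le
        _ ≤ _ := rpow_subadd hα0 hα1 (by positivity) (by positivity)
    rw [Real.div_rpow (mul_nonneg hAnn hBnn) (by positivity),
        Real.div_rpow (by positivity) (by positivity)]
    rw [div_le_iff₀ (by positivity)]
    have : (1 + (E * F) ^ α / (C * D) ^ α) * (C * D) ^ α
        = (C * D) ^ α + (E * F) ^ α := by
      field_simp
    rw [this]
    exact hsub
  have k4 : (E * F / (C * D)) ^ α * (C * D / (E * F)) ^ α = 1 := by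
    rw [← Real.mul_rpow (by positivity) (by positivity)]
    have : E * F / (C * D) * (C * D / (E * F)) = 1 := by field_simp
    rw [this, Real.one_rpow]
  set K := (A * B / (C * D)) ^ α
  set L := (E * F / (C * D)) ^ α
  set M := (C * D / (E * F)) ^ α
  have hLnn : 0 ≤ L := Real.rpow_nonneg (by positivity) α
  have hh1 : K * (R * S) ≤ (1 + L) * (R * S) :=
    mul_le_mul_of_nonneg_right k3 (mul_nonneg hRnn hSnn)
  have hh2 : L * (R * S) ≤ L * (M * (U * V)) := mul_le_mul_of_nonneg_left k2 hLnn
  nlinarith [hh1, hh2, k1, k4, mul_nonneg hRnn hSnn, mul_nonneg hUnn hVnn]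
end

section
/- Let (X,d), (Y,ρ) be semimetric spaces and f: X→Y an η-quasisymmetric mapping. Suppose that whenever t₁,t₂∈(0,∞) with t₁+t₂=1, the equalities 1/η(1/t₁) + 1/η(1/t₂) = 1 and η(t₁) + η(t₂) = 1 hold. Then f preserves metric betweenness: if x,y,z∈X are distinct and d(x,z) = d(x,y) + d(y,z), then ρ(f(x),f(z)) = ρ(f(x),f(y)) + ρ(f(y),f(z)). -/
open Set Filter Topology

theorem stmt_12 {X Y : Type*} (d : X → X → ℝ) (ρ : Y → Y → ℝ) (η : ℝ → ℝ) (f : X → Y)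
    (hd : IsSemimetric d) (hρ : IsSemimetric ρ)
    (hq : IsQuasisymmetric d ρ η f)
    (hcond : ∀ t₁ t₂ : ℝ, 0 < t₁ → 0 < t₂ → t₁ + t₂ = 1 →
      1 / η (1 / t₁) + 1 / η (1 / t₂) = 1 ∧ η t₁ + η t₂ = 1) :
    ∀ x y z : X, x ≠ y → y ≠ z → x ≠ z → d x z = d x y + d y z →
      ρ (f x) (f z) = ρ (f x) (f y) + ρ (f y) (f z) := by
  intro x y z hxy hyz hxz heq
  obtain ⟨hη, hqs⟩ := hq
  have ha : 0 < d x y := lt_of_le_of_ne (hd.nonneg x y) fun h => hxy ((hd.eq_iff x y).1 h.symm)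
  have hb : 0 < d y z := lt_of_le_of_ne (hd.nonneg y z) fun h => hyz ((hd.eq_iff y z).1 h.symm)
  have hs : 0 < d x z := by linarith
  set t₁ := d x y / d x z with ht₁def
  set t₂ := d y z / d x z with ht₂def
  have ht₁ : 0 < t₁ := div_pos ha hs
  have ht₂ : 0 < t₂ := div_pos hb hs
  have hsum : t₁ + t₂ = 1 := by rw [ht₁def, ht₂def, ← add_div, ← heq, div_self hs.ne']
  obtain ⟨hc1, hc2⟩ := hcond t₁ t₂ ht₁ ht₂ hsum
  have hη1pos : 0 < η (1 / t₁) := by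
    have := hη.strictMonoOn (Set.self_mem_Ici) (Set.mem_Ici.2 (le_of_lt (one_div_pos.2 ht₁))) (one_div_pos.2 ht₁)
    rwa [hη.zero] at this
  have hη2pos : 0 < η (1 / t₂) := by
    have := hη.strictMonoOn (Set.self_mem_Ici) (Set.mem_Ici.2 (le_of_lt (one_div_pos.2 ht₂))) (one_div_pos.2 ht₂)
    rwa [hη.zero] at this
  -- upper bounds
  have h1 : ρ (f x) (f y) ≤ η t₁ * ρ (f x) (f z) := by
    apply hqs x y z t₁ ht₁
    rw [ht₁def]; field_simp; exact le_rfl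
  have h2 : ρ (f z) (f y) ≤ η t₂ * ρ (f z) (f x) := by
    apply hqs z y x t₂ ht₂
    rw [ht₂def, hd.symm z y, hd.symm z x]; field_simp; exact le_rfl
  -- lower bounds
  have h3 : ρ (f x) (f z) ≤ η (1 / t₁) * ρ (f x) (f y) := by
    apply hqs x z y (1 / t₁) (one_div_pos.2 ht₁)
    rw [ht₁def]; field_simp; exact le_rfl
  have h4 : ρ (f z) (f x) ≤ η (1 / t₂) * ρ (f z) (f y) := by
    apply hqs z x y (1 / t₂) (one_div_pos.2 ht₂)
    rw [ht₂def, hd.symm z x, hd.symm z y]; field_simp; exact le_rfl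
  have hsymm1 := hρ.symm (f z) (f y)
  have hsymm2 := hρ.symm (f z) (f x)
  set P := ρ (f x) (f z)
  set A := ρ (f x) (f y)
  set B := ρ (f y) (f z)
  rw [hsymm1, hsymm2] at h2 h4
  -- h2 : B ≤ η t₂ * P, h4 : P ≤ η (1/t₂) * B
  have hub : A + B ≤ P := by
    have := add_le_add h1 h2
    have e : η t₁ * P + η t₂ * P = P := by rw [← add_mul, hc2, one_mul]
    linarith
  have hlb : P ≤ A + B := by
    have e1 : P / η (1 / t₁) ≤ A := (div_le_iff₀ hη1pos).2 (by linarith [h3])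
    have e2 : P / η (1 / t₂) ≤ B := (div_le_iff₀ hη2pos).2 (by linarith [h4])
    have key : η (1 / t₁) + η (1 / t₂) = η (1 / t₁) * η (1 / t₂) := by
      field_simp at hc1; linarith
    have : P / η (1 / t₁) + P / η (1 / t₂) = P := by
      field_simp
      linear_combination P * key
    linarith
  linarith
end

section
/- Let (X,d) and (Y,ρ) be semimetric spaces with continuous, strictly increasing (in both arguments) triangle functions Φ₁ and Φ₂ respectively, and let f: X→Y be η-quasisymmetric. If A ⊆ B ⊆ X with 0 < diam A and diam B < ∞, then diam f(B) < ∞ and diam f(A)/diam f(B) ≤ η(diam A / φ₁⁻¹(diam B)), where φ₁(t) = Φ₁(t,t). -/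
open Set Filter Topology

/-!
Since `φ(t) = Φ₁(t,t)` is continuous, `diam B = φ(t₀)` for some `t₀ > 0`, and `t₀ = φ⁻¹(diam B)`.
For `u < t₀` every `x ∈ B` has a point `b ∈ B` with `d(x,b) > u`: otherwise the triangle function
would give `diam B ≤ φ(u) < φ(t₀)`, where `φ` is strictly increasing because it is monotone and has
the left inverse `φ⁻¹`. For `x, a ∈ A` we then have `d(x,a) ≤ (diam A / u) d(x,b)`, so
quasisymmetry gives `ρ(fx,fa) ≤ η(diam A / u) ρ(fx,fb) ≤ η(diam A / u) diam f(B)`.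
Letting `u ↑ t₀` and using the continuity of `η` gives the bound.
-/

section Diameter

variable {X : Type*} {d : X → X → ℝ} {A B : Set X}

lemma distSet_mono (hAB : A ⊆ B) : distSet d A ⊆ distSet d B := by
  rintro r ⟨x, hx, y, hy, rfl⟩
  exact ⟨x, hAB hx, y, hAB hy, rfl⟩

lemma dist_le_sdiam (hA : BddAbove (distSet d A)) {x y : X} (hx : x ∈ A) (hy : y ∈ A) :
    d x y ≤ sdiam d A :=
  le_csSup hA ⟨x, hx, y, hy, rfl⟩

lemma sdiam_le {r : ℝ} (h : ∀ x ∈ A, ∀ y ∈ A, d x y ≤ r) (hr : 0 ≤ r) : sdiam d A ≤ r :=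
  Real.sSup_le (by rintro _ ⟨x, hx, y, hy, rfl⟩; exact h x hx y hy) hr

lemma IsSemimetric.sdiam_nonneg (hd : IsSemimetric d) : 0 ≤ sdiam d A :=
  Real.sSup_nonneg (by rintro _ ⟨x, -, y, -, rfl⟩; exact hd.nonneg x y)

lemma exists_pos_dist_of_sdiam_pos (hA : 0 < sdiam d A) : ∃ x ∈ A, ∃ y ∈ A, 0 < d x y := by
  by_contra! h
  exact hA.not_ge (sdiam_le h le_rfl)

lemma sdiam_mono (hB : BddAbove (distSet d B)) (hAB : A ⊆ B) (hA : A.Nonempty) :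
    sdiam d A ≤ sdiam d B :=
  have ⟨x, hx⟩ := hA
  csSup_le_csSup hB ⟨d x x, x, hx, x, hx, rfl⟩ (distSet_mono hAB)

end Diameter

namespace IsTriangleFunction

variable {X : Type*} {d : X → X → ℝ} {Φ : ℝ → ℝ → ℝ} {B : Set X}

lemma nonneg (hT : IsTriangleFunction d Φ) {u v : ℝ} (hu : 0 ≤ u) (hv : 0 ≤ v) : 0 ≤ Φ u v :=
  hT.zero ▸ hT.mono 0 u 0 v le_rfl hu le_rfl hv

lemma dist_le_diag (hd : IsSemimetric d) (hT : IsTriangleFunction d Φ) {x y z : X} {u : ℝ}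
    (hy : d x y ≤ u) (hz : d x z ≤ u) : d y z ≤ Φ u u :=
  calc d y z ≤ Φ (d y x) (d z x) := hT.tri y z x
    _ ≤ Φ u u := hT.mono _ _ _ _ (hd.nonneg y x) (hd.symm x y ▸ hy) (hd.nonneg z x)
        (hd.symm x z ▸ hz)

lemma sdiam_le_diag (hd : IsSemimetric d) (hT : IsTriangleFunction d Φ) {x : X} {u : ℝ}
    (hu : 0 ≤ u) (h : ∀ y ∈ B, d x y ≤ u) : sdiam d B ≤ Φ u u :=
  sdiam_le (fun _ hy _ hz => hT.dist_le_diag hd (h _ hy) (h _ hz)) (hT.nonneg hu hu)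

lemma bddAbove_distSet (hd : IsSemimetric d) (hT : IsTriangleFunction d Φ) {x : X} {u : ℝ}
    (h : ∀ y ∈ B, d x y ≤ u) : BddAbove (distSet d B) :=
  ⟨Φ u u, by rintro _ ⟨y, hy, z, hz, rfl⟩; exact hT.dist_le_diag hd (h y hy) (h z hz)⟩

lemma exists_lt_dist_of_diag_lt_sdiam (hd : IsSemimetric d) (hT : IsTriangleFunction d Φ)
    {u : ℝ} (hu : 0 ≤ u) (hlt : Φ u u < sdiam d B) (x : X) : ∃ b ∈ B, u < d x b := by
  by_contra! h
  exact hlt.not_ge (hT.sdiam_le_diag hd hu h)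

lemma sdiam_le_diag_sdiam (hd : IsSemimetric d) (hT : IsTriangleFunction d Φ)
    (hB : BddAbove (distSet d B)) : sdiam d B ≤ Φ (sdiam d B) (sdiam d B) :=
  have hdiam := hd.sdiam_nonneg (A := B)
  sdiam_le (fun x hx _ hy => hT.dist_le_diag hd ((hd.eq_iff x x).2 rfl ▸ hdiam)
    (dist_le_sdiam hB hx hy)) (hT.nonneg hdiam hdiam)

lemma strictMonoOn_diag (hT : IsTriangleFunction d Φ) {ψ : ℝ → ℝ}
    (hψ : ∀ t, 0 ≤ t → ψ (Φ t t) = t) : StrictMonoOn (fun t => Φ t t) (Ici 0) :=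
  MonotoneOn.strictMonoOn_of_injOn (fun _ hs _ _ hst => hT.mono _ _ _ _ hs hst hs hst)
    (LeftInvOn.injOn (f₁' := ψ) fun t ht => hψ t ht)

lemma exists_diag_eq (hT : IsTriangleFunction d Φ)
    (hc : ContinuousOn (fun p : ℝ × ℝ => Φ p.1 p.2) (Ici 0 ×ˢ Ici 0)) {s : ℝ} (hs : 0 ≤ s)
    (hle : s ≤ Φ s s) : ∃ t ∈ Icc 0 s, Φ t t = s := by
  have hdiag : ContinuousOn (fun t => Φ t t) (Icc 0 s) :=
    hc.comp (continuous_id.prodMk continuous_id).continuousOn fun _ ht => ⟨ht.1, ht.1⟩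
  exact intermediate_value_Icc hs hdiag ⟨hT.zero.symm ▸ hs, hle⟩

end IsTriangleFunction

lemma IsQSHomeo.le_apply_div_of_forall_lt {η : ℝ → ℝ} (hη : IsQSHomeo η) {c t r : ℝ}
    (hc : 0 ≤ c) (ht : 0 < t) (h : ∀ u ∈ Ioo 0 t, r ≤ η (c / u)) : r ≤ η (c / t) := by
  have hIoo : Ioo 0 t ∈ 𝓝[<] t := Ioo_mem_nhdsLT ht
  have hdiv : Tendsto (fun u => c / u) (𝓝[<] t) (𝓝[Ici 0] (c / t)) :=
    tendsto_nhdsWithin_iff.2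
      ⟨(tendsto_const_nhds.div tendsto_id ht.ne').mono_left nhdsWithin_le_nhds,
        eventually_of_mem hIoo fun u hu => div_nonneg hc hu.1.le⟩
  exact ge_of_tendsto ((hη.continuousOn _ (div_nonneg hc ht.le)).tendsto.comp hdiv)
    (eventually_of_mem hIoo h)

namespace IsQuasisymmetric

variable {X Y : Type*} {d : X → X → ℝ} {ρ : Y → Y → ℝ} {η : ℝ → ℝ} {f : X → Y} {A B : Set X}

lemma bddAbove_distSet_image {Φ : ℝ → ℝ → ℝ} (hq : IsQuasisymmetric d ρ η f)
    (hρ : IsSemimetric ρ) (hT : IsTriangleFunction ρ Φ) (hB : BddAbove (distSet d B))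
    {x a : X} (hx : x ∈ B) (ha : a ∈ B) (hxa : 0 < d x a) : BddAbove (distSet ρ (f '' B)) := by
  refine hT.bddAbove_distSet hρ (x := f x) (u := η (sdiam d B / d x a) * ρ (f x) (f a)) ?_
  rintro _ ⟨y, hy, rfl⟩
  refine hq.2 x y a _ (div_pos (hxa.trans_le (dist_le_sdiam hB hx ha)) hxa) ?_
  rw [div_mul_cancel₀ _ hxa.ne']
  exact dist_le_sdiam hB hx hy

lemma sdiam_image_le (hq : IsQuasisymmetric d ρ η f) (hρ : IsSemimetric ρ) (hAB : A ⊆ B)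
    (hA : BddAbove (distSet d A)) (hA₀ : 0 < sdiam d A) (hfB : BddAbove (distSet ρ (f '' B)))
    {u : ℝ} (hu : 0 < u) (hfar : ∀ x ∈ A, ∃ b ∈ B, u < d x b) :
    sdiam ρ (f '' A) ≤ η (sdiam d A / u) * sdiam ρ (f '' B) := by
  have hη : 0 ≤ η (sdiam d A / u) := hq.1.maps _ (div_pos hA₀ hu).le
  refine sdiam_le ?_ (mul_nonneg hη hρ.sdiam_nonneg)
  rintro _ ⟨x, hx, rfl⟩ _ ⟨a, ha, rfl⟩
  obtain ⟨b, hb, hub⟩ := hfar x hx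
  have hxa : d x a ≤ sdiam d A / u * d x b :=
    calc d x a ≤ sdiam d A := dist_le_sdiam hA hx ha
      _ = sdiam d A / u * u := (div_mul_cancel₀ _ hu.ne').symm
      _ ≤ sdiam d A / u * d x b := by gcongr
  calc ρ (f x) (f a) ≤ η (sdiam d A / u) * ρ (f x) (f b) := hq.2 x a b _ (div_pos hA₀ hu) hxa
    _ ≤ η (sdiam d A / u) * sdiam ρ (f '' B) :=
      mul_le_mul_of_nonneg_left (dist_le_sdiam hfB (mem_image_of_mem f (hAB hx))
        (mem_image_of_mem f hb)) hη

end IsQuasisymmetric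

theorem stmt_15_general {X Y : Type*} (d : X → X → ℝ) (ρ : Y → Y → ℝ) (η : ℝ → ℝ) (f : X → Y)
    (Φ₁ Φ₂ : ℝ → ℝ → ℝ) (ψ : ℝ → ℝ)
    (hd : IsSemimetric d) (hρ : IsSemimetric ρ)
    (hT1 : IsTriangleFunction d Φ₁) (hT2 : IsTriangleFunction ρ Φ₂)
    (hc1 : ContinuousOn (fun p : ℝ × ℝ => Φ₁ p.1 p.2) (Set.Ici 0 ×ˢ Set.Ici 0))
    (hq : IsQuasisymmetric d ρ η f)
    (hψ1 : ∀ t, 0 ≤ t → ψ (Φ₁ t t) = t)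
    (A B : Set X) (hAB : A ⊆ B)
    (hA : 0 < sdiam d A) (hB : BddAbove (distSet d B)) :
    BddAbove (distSet ρ (f '' B)) ∧
      sdiam ρ (f '' A) / sdiam ρ (f '' B) ≤ η (sdiam d A / ψ (sdiam d B)) := by
  obtain ⟨x, hx, a, ha, hxa⟩ := exists_pos_dist_of_sdiam_pos hA
  have hfB := hq.bddAbove_distSet_image hρ hT2 hB (hAB hx) (hAB ha) hxa
  have hBpos : 0 < sdiam d B := hA.trans_le (sdiam_mono hB hAB ⟨x, hx⟩)
  obtain ⟨t, ⟨ht₀, -⟩, ht⟩ := hT1.exists_diag_eq hc1 hBpos.le (hT1.sdiam_le_diag_sdiam hd hB)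
  have htpos : 0 < t := ht₀.lt_of_ne <| by rintro rfl; exact hBpos.ne (ht ▸ hT1.zero).symm
  refine ⟨hfB, ?_⟩
  rw [← ht, hψ1 t ht₀]
  refine hq.1.le_apply_div_of_forall_lt hA.le htpos fun u hu => div_le_of_le_mul₀
    hρ.sdiam_nonneg (hq.1.maps _ (div_pos hA hu.1).le) ?_
  have hdiag : Φ₁ u u < sdiam d B := ht ▸ hT1.strictMonoOn_diag hψ1 hu.1.le ht₀ hu.2
  exact hq.sdiam_image_le hρ hAB (hB.mono (distSet_mono hAB)) hA hfB hu.1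
    fun y _ => hT1.exists_lt_dist_of_diag_lt_sdiam hd hu.1.le hdiag y

theorem stmt_15 {X Y : Type*} (d : X → X → ℝ) (ρ : Y → Y → ℝ) (η : ℝ → ℝ) (f : X → Y)
    (Φ₁ Φ₂ : ℝ → ℝ → ℝ) (ψ : ℝ → ℝ)
    (hd : IsSemimetric d) (hρ : IsSemimetric ρ)
    (hT1 : IsTriangleFunction d Φ₁) (hT2 : IsTriangleFunction ρ Φ₂)
    (hc1 : ContinuousOn (fun p : ℝ × ℝ => Φ₁ p.1 p.2) (Set.Ici 0 ×ˢ Set.Ici 0))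
    (hc2 : ContinuousOn (fun p : ℝ × ℝ => Φ₂ p.1 p.2) (Set.Ici 0 ×ˢ Set.Ici 0))
    (hs1 : ∀ v, 0 ≤ v → StrictMonoOn (fun u => Φ₁ u v) (Set.Ici 0))
    (hs2 : ∀ v, 0 ≤ v → StrictMonoOn (fun u => Φ₂ u v) (Set.Ici 0))
    (hq : IsQuasisymmetric d ρ η f)
    (hψ1 : ∀ t, 0 ≤ t → ψ (Φ₁ t t) = t) (hψ2 : ∀ s, 0 ≤ s → Φ₁ (ψ s) (ψ s) = s)
    (A B : Set X) (hAB : A ⊆ B)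
    (hA : 0 < sdiam d A) (hB : BddAbove (distSet d B)) :
    BddAbove (distSet ρ (f '' B)) ∧
      sdiam ρ (f '' A) / sdiam ρ (f '' B) ≤ η (sdiam d A / ψ (sdiam d B)) :=
  stmt_15_general d ρ η f Φ₁ Φ₂ ψ hd hρ hT1 hT2 hc1 hq hψ1 A B hAB hA hB
end

section
/- Let (X,d) and (Y,ρ) be semimetric spaces with continuous, strictly increasing triangle functions (in both arguments). Then every η-quasisymmetric mapping f: X→Y maps Cauchy sequences to Cauchy sequences. -/
open Set Filter Topology

theorem stmt_17 {X Y : Type*} (d : X → X → ℝ) (ρ : Y → Y → ℝ) (η : ℝ → ℝ) (f : X → Y)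
    (Φ₁ Φ₂ : ℝ → ℝ → ℝ)
    (hd : IsSemimetric d) (hρ : IsSemimetric ρ)
    (hT1 : IsTriangleFunction d Φ₁) (hT2 : IsTriangleFunction ρ Φ₂)
    (hc1 : ContinuousOn (fun p : ℝ × ℝ => Φ₁ p.1 p.2) (Set.Ici 0 ×ˢ Set.Ici 0))
    (hc2 : ContinuousOn (fun p : ℝ × ℝ => Φ₂ p.1 p.2) (Set.Ici 0 ×ˢ Set.Ici 0))
    (hs1 : ∀ v, 0 ≤ v → StrictMonoOn (fun u => Φ₁ u v) (Set.Ici 0))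
    (hs2 : ∀ v, 0 ≤ v → StrictMonoOn (fun u => Φ₂ u v) (Set.Ici 0))
    (hq : IsQuasisymmetric d ρ η f) :
    ∀ xs : ℕ → X,
      (∀ ε : ℝ, 0 < ε → ∃ N : ℕ, ∀ m ≥ N, ∀ n ≥ N, d (xs m) (xs n) < ε) →
      (∀ ε : ℝ, 0 < ε → ∃ N : ℕ, ∀ m ≥ N, ∀ n ≥ N, ρ (f (xs m)) (f (xs n)) < ε) := by
  intro xs hC ε hε
  obtain ⟨hη, hQS⟩ := hq
  by_cases hconst : ∃ N, ∀ m ≥ N, ∀ n ≥ N, xs m = xs n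
  · obtain ⟨N, hN⟩ := hconst
    refine ⟨N, fun m hm n hn => ?_⟩
    rw [hN m hm n hn, (hρ.eq_iff _ _).2 rfl]
    exact hε
  push_neg at hconst
  obtain ⟨N₀, hN₀⟩ := hC 1 one_pos
  obtain ⟨i, hi, j, hj, hij⟩ := hconst N₀
  set p := xs i with hp
  set q := xs j with hq'
  have hc : 0 < d p q :=
    lt_of_le_of_ne (hd.nonneg _ _) (fun h => hij ((hd.eq_iff _ _).1 h.symm))
  set c := d p q with hcdef
  -- obtain δ > 0 with Φ₁ δ δ < c
  have htend : Tendsto (fun δ : ℝ => Φ₁ δ δ) (𝓝[>] (0:ℝ)) (𝓝 (Φ₁ 0 0)) := by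
    have h1 : Tendsto (fun δ : ℝ => ((δ, δ) : ℝ × ℝ)) (𝓝[>] (0:ℝ))
        (𝓝[(Set.Ici (0:ℝ) ×ˢ Set.Ici (0:ℝ))] ((0,0) : ℝ × ℝ)) := by
      apply tendsto_nhdsWithin_of_tendsto_nhds_of_eventually_within
      · exact ((continuous_id.prodMk continuous_id).tendsto 0).mono_left nhdsWithin_le_nhds
      · filter_upwards [self_mem_nhdsWithin] with δ hδ
        exact ⟨Set.mem_Ici.2 (le_of_lt hδ), Set.mem_Ici.2 (le_of_lt hδ)⟩
    exact ((hc1 (0,0) (Set.mem_prod.2 ⟨Set.self_mem_Ici, Set.self_mem_Ici⟩)).tendsto).comp h1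
  rw [hT1.zero] at htend
  obtain ⟨δ, hδc, hδpos⟩ :=
    ((htend.eventually (gt_mem_nhds hc)).and self_mem_nhdsWithin).exists
  -- key: every point is δ-far from p or from q
  have hkey : ∀ x : X, δ ≤ d x p ∨ δ ≤ d x q := by
    intro x
    by_contra hcon
    push_neg at hcon
    have h1 : d p q ≤ Φ₁ (d x p) (d x q) := by
      have := hT1.tri p q x
      rwa [hd.symm p x, hd.symm q x] at this
    have h2 : Φ₁ (d x p) (d x q) ≤ Φ₁ δ δ :=
      hT1.mono _ _ _ _ (hd.nonneg _ _) (le_of_lt hcon.1) (hd.nonneg _ _) (le_of_lt hcon.2)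
    exact absurd (h1.trans h2) (not_le.2 hδc)
  rcases (hρ.nonneg (f p) (f q)).eq_or_lt with hM | hM
  · -- f is constant
    have hfconst : ∀ a : X, f a = f p := by
      intro a
      rcases (hd.nonneg p a).eq_or_lt with h0 | h0
      · rw [(hd.eq_iff p a).1 h0.symm]
      · have ht : (0:ℝ) < d p a / c := div_pos h0 hc
        have hle : d p a ≤ (d p a / c) * d p q := by
          rw [← hcdef, div_mul_cancel₀ _ (ne_of_gt hc)]
        have := hQS p a q _ ht hle
        rw [← hM, mul_zero] at this
        have h0' : ρ (f p) (f a) = 0 := le_antisymm this (hρ.nonneg _ _)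
        exact ((hρ.eq_iff _ _).1 h0').symm
    refine ⟨0, fun m _ n _ => ?_⟩
    rw [hfconst (xs m), hfconst (xs n), (hρ.eq_iff _ _).2 rfl]
    exact hε
  · -- main case
    have hηc : 0 < η (1 / c) := by
      have := hη.strictMonoOn (Set.self_mem_Ici) (Set.mem_Ici.2 (le_of_lt (one_div_pos.2 hc)))
        (one_div_pos.2 hc)
      rwa [hη.zero] at this
    set K := η (1 / c) * ρ (f p) (f q) with hKdef
    have hK : 0 < K := mul_pos hηc hM
    have hbound : ∀ m, N₀ ≤ m → ρ (f p) (f (xs m)) ≤ K ∧ ρ (f q) (f (xs m)) ≤ K := by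
      intro m hm
      constructor
      · have h1 : d p (xs m) ≤ (1 / c) * d p q := by
          rw [← hcdef, one_div_mul_cancel (ne_of_gt hc)]
          exact le_of_lt (hN₀ i hi m hm)
        exact (hQS p (xs m) q _ (one_div_pos.2 hc) h1).trans_eq rfl
      · have h1 : d q (xs m) ≤ (1 / c) * d q p := by
          rw [hd.symm q p, ← hcdef, one_div_mul_cancel (ne_of_gt hc)]
          exact le_of_lt (hN₀ j hj m hm)
        have := hQS q (xs m) p _ (one_div_pos.2 hc) h1
        rwa [hρ.symm (f q) (f p)] at this
    obtain ⟨t₀, ht₀0, ht₀⟩ := hη.surjOn (ε / (2 * K)) (le_of_lt (div_pos hε (by linarith)))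
    have ht₀pos : 0 < t₀ := by
      rcases ht₀0.eq_or_lt with h | h
      · exfalso
        rw [← h, hη.zero] at ht₀
        have : (0:ℝ) < ε / (2 * K) := div_pos hε (by linarith)
        linarith
      · exact h
    obtain ⟨N₁, hN₁⟩ := hC (t₀ * δ) (mul_pos ht₀pos hδpos)
    refine ⟨max N₀ N₁, fun m hm n hn => ?_⟩
    have hm₀ : N₀ ≤ m := le_trans (le_max_left _ _) hm
    have hm₁ : N₁ ≤ m := le_trans (le_max_right _ _) hm
    have hn₁ : N₁ ≤ n := le_trans (le_max_right _ _) hn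
    have hd' : d (xs m) (xs n) < t₀ * δ := hN₁ m hm₁ n hn₁
    have : ∃ b : Y, ρ b (f (xs m)) ≤ K ∧
        ρ (f (xs m)) (f (xs n)) ≤ η t₀ * ρ (f (xs m)) b := by
      rcases hkey (xs m) with hb | hb
      · refine ⟨f p, (hbound m hm₀).1, ?_⟩
        refine hQS (xs m) (xs n) p t₀ ht₀pos ?_
        calc d (xs m) (xs n) ≤ t₀ * δ := le_of_lt hd'
          _ ≤ t₀ * d (xs m) p := mul_le_mul_of_nonneg_left hb (le_of_lt ht₀pos)
      · refine ⟨f q, (hbound m hm₀).2, ?_⟩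
        refine hQS (xs m) (xs n) q t₀ ht₀pos ?_
        calc d (xs m) (xs n) ≤ t₀ * δ := le_of_lt hd'
          _ ≤ t₀ * d (xs m) q := mul_le_mul_of_nonneg_left hb (le_of_lt ht₀pos)
    obtain ⟨b, hbK, hb2⟩ := this
    have hρsym : ρ (f (xs m)) b ≤ K := by rw [hρ.symm]; exact hbK
    calc ρ (f (xs m)) (f (xs n)) ≤ η t₀ * ρ (f (xs m)) b := hb2
      _ ≤ η t₀ * K := mul_le_mul_of_nonneg_left hρsym (hη.maps t₀ ht₀0)
      _ = (ε / (2 * K)) * K := by rw [ht₀]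
      _ = ε / 2 := by field_simp
      _ < ε := by linarith
end

section
/- Let (X,d) and (Y,ρ) be semimetric spaces, f: X→Y a bijection that is a weak similarity with scaling function φ. If there exists a continuous, submultiplicative (φ*(uv) ≤ φ*(u)·φ*(v)), strictly increasing extension φ*: [0,∞)→[0,∞) of φ, then f is an η-quasisymmetric mapping with η = φ*. -/
open Set Filter Topology

theorem MonotoneOn.le_mul_of_le_mul_of_submultiplicative {η : ℝ → ℝ}
    (hmono : MonotoneOn η (Ici 0))
    (hsub : ∀ u v : ℝ, 0 ≤ u → 0 ≤ v → η (u * v) ≤ η u * η v)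
    {s t r : ℝ} (hs : 0 ≤ s) (ht : 0 ≤ t) (hr : 0 ≤ r) (h : s ≤ t * r) :
    η s ≤ η t * η r :=
  (hmono hs (mul_nonneg ht hr) h).trans (hsub t r ht hr)

theorem IsWeakSimilarity.apply_eq_extension_dist {X Y : Type*} {d : X → X → ℝ}
    {ρ : Y → Y → ℝ} {f : X → Y} {φ ψ : ℝ → ℝ} (hws : IsWeakSimilarity d ρ f φ)
    (hext : ∀ r ∈ spectrum' d, ψ r = φ r) (x y : X) :
    ρ (f x) (f y) = ψ (d x y) := by
  rw [hext _ ⟨x, y, rfl⟩, hws.2.2.2]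

theorem stmt_18_general {X Y : Type*} (d : X → X → ℝ) (ρ : Y → Y → ℝ) (f : X → Y)
    (φ φstar : ℝ → ℝ)
    (hd : IsSemimetric d)
    (hws : IsWeakSimilarity d ρ f φ)
    (hext : ∀ r ∈ spectrum' d, φstar r = φ r)
    (hhomeo : IsQSHomeo φstar)
    (hsub : ∀ u v : ℝ, 0 ≤ u → 0 ≤ v → φstar (u * v) ≤ φstar u * φstar v) :
    IsQuasisymmetric d ρ φstar f := by
  refine ⟨hhomeo, fun x a b t ht hle => ?_⟩
  rw [hws.apply_eq_extension_dist hext, hws.apply_eq_extension_dist hext]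
  exact hhomeo.strictMonoOn.monotoneOn.le_mul_of_le_mul_of_submultiplicative hsub
    (hd.nonneg x a) ht.le (hd.nonneg x b) hle

theorem stmt_18 {X Y : Type*} (d : X → X → ℝ) (ρ : Y → Y → ℝ) (f : X → Y)
    (φ φstar : ℝ → ℝ)
    (hd : IsSemimetric d) (hρ : IsSemimetric ρ)
    (hws : IsWeakSimilarity d ρ f φ)
    (hext : ∀ r ∈ spectrum' d, φstar r = φ r)
    (hhomeo : IsQSHomeo φstar)
    (hsub : ∀ u v : ℝ, 0 ≤ u → 0 ≤ v → φstar (u * v) ≤ φstar u * φstar v) :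
    IsQuasisymmetric d ρ φstar f :=
  stmt_18_general d ρ f φ φstar hd hws hext hhomeo hsub
end

section
/- Let (X,d), (Y,ρ) be semimetric spaces and f: X→Y a bijective η-quasisymmetric mapping. If η(k)·η(1/k) = 1 for all k>0, then f is a weak similarity; equivalently, for all x,y,z,w∈X: d(x,y) < d(z,w) implies ρ(f(x),f(y)) < ρ(f(z),f(w)), and d(x,y) = d(z,w) implies ρ(f(x),f(y)) = ρ(f(z),f(w)). -/
open Set Filter Topology

/-
Applying the quasisymmetry condition in both directions at a common point `x` and using
`η k * η (1 / k) = 1` forces equality: `ρ (f x) (f a) = η (d x a / d x b) * ρ (f x) (f b)`.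
Two pairs `(x, y)`, `(z, w)` are then compared through the pivot pair `(y, z)` (or `(z, w)`
itself when `y = z`), whose image distance is a common positive factor; as `η` is strictly
increasing, `f` preserves equality and strict order of distances.
-/

section

variable {X Y : Type*} {d : X → X → ℝ} {ρ : Y → Y → ℝ} {η : ℝ → ℝ} {f : X → Y}

theorem IsSemimetric.self_s19 (hd : IsSemimetric d) (x : X) : d x x = 0 :=
  (hd.eq_iff x x).2 rfl

theorem IsSemimetric.pos_of_ne_s19 (hd : IsSemimetric d) {x y : X} (hxy : x ≠ y) : 0 < d x y :=
  (hd.nonneg x y).lt_of_ne fun h => hxy ((hd.eq_iff x y).1 h.symm)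

theorem IsQSHomeo.map_one (hη : IsQSHomeo η) (hcond : ∀ k : ℝ, 0 < k → η k * η (1 / k) = 1) :
    η 1 = 1 := by
  have h := hcond 1 one_pos
  rw [div_one] at h
  nlinarith [hη.maps 1 zero_le_one]

theorem IsQuasisymmetric.eq_eta_mul (hd : IsSemimetric d) (hρ : IsSemimetric ρ)
    (hq : IsQuasisymmetric d ρ η f) (hcond : ∀ k : ℝ, 0 < k → η k * η (1 / k) = 1)
    {x b : X} (hxb : x ≠ b) (a : X) :
    ρ (f x) (f a) = η (d x a / d x b) * ρ (f x) (f b) := by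
  obtain ⟨hη, hqs⟩ := hq
  rcases eq_or_ne x a with rfl | hxa
  · rw [hd.self_s19, hρ.self_s19, zero_div, hη.zero, zero_mul]
  have ha := hd.pos_of_ne_s19 hxa
  have hb := hd.pos_of_ne_s19 hxb
  set t := d x a / d x b
  have ht : 0 < t := div_pos ha hb
  have hle : ρ (f x) (f a) ≤ η t * ρ (f x) (f b) :=
    hqs x a b t ht (div_mul_cancel₀ _ hb.ne').ge
  have hge : ρ (f x) (f b) ≤ η (1 / t) * ρ (f x) (f a) :=
    hqs x b a (1 / t) (one_div_pos.2 ht) (by rw [one_div_div, div_mul_cancel₀ _ ha.ne'])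
  refine le_antisymm hle ?_
  calc η t * ρ (f x) (f b) ≤ η t * (η (1 / t) * ρ (f x) (f a)) :=
        mul_le_mul_of_nonneg_left hge (hη.maps t ht.le)
    _ = ρ (f x) (f a) := by rw [← mul_assoc, hcond t ht, one_mul]

theorem IsQuasisymmetric.exists_common_scale (hd : IsSemimetric d) (hρ : IsSemimetric ρ)
    (hinj : Function.Injective f) (hq : IsQuasisymmetric d ρ η f)
    (hcond : ∀ k : ℝ, 0 < k → η k * η (1 / k) = 1) (x y : X) {z w : X} (hzw : z ≠ w) :
    ∃ s c : ℝ, 0 < s ∧ 0 < c ∧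
      ρ (f x) (f y) = η (d x y / s) * c ∧ ρ (f z) (f w) = η (d z w / s) * c := by
  have key {p q : X} (hpq : p ≠ q) (a : X) := hq.eq_eta_mul hd hρ hcond hpq a
  rcases eq_or_ne y z with rfl | hyz
  · refine ⟨d y w, ρ (f y) (f w), hd.pos_of_ne_s19 hzw, hρ.pos_of_ne_s19 (hinj.ne hzw), ?_, ?_⟩
    · rw [hρ.symm, hd.symm, key hzw x]
    · rw [div_self (hd.pos_of_ne_s19 hzw).ne', hq.1.map_one hcond, one_mul]
  · refine ⟨d y z, ρ (f y) (f z), hd.pos_of_ne_s19 hyz, hρ.pos_of_ne_s19 (hinj.ne hyz), ?_, ?_⟩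
    · rw [hρ.symm, hd.symm x, key hyz x]
    · rw [key hyz.symm w, hd.symm z y, hρ.symm (f z)]

theorem IsQuasisymmetric.lt_of_lt (hd : IsSemimetric d) (hρ : IsSemimetric ρ)
    (hinj : Function.Injective f) (hq : IsQuasisymmetric d ρ η f)
    (hcond : ∀ k : ℝ, 0 < k → η k * η (1 / k) = 1) {x y z w : X} (h : d x y < d z w) :
    ρ (f x) (f y) < ρ (f z) (f w) := by
  have hzw : z ≠ w := by
    rintro rfl
    exact (hd.nonneg x y).not_gt (hd.self_s19 z ▸ h)
  obtain ⟨s, c, hs, hc, hxy, hzw⟩ := hq.exists_common_scale hd hρ hinj hcond x y hzw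
  rw [hxy, hzw]
  refine mul_lt_mul_of_pos_right (hq.1.strictMonoOn ?_ ?_ (div_lt_div_of_pos_right h hs)) hc
  · exact div_nonneg (hd.nonneg x y) hs.le
  · exact div_nonneg (hd.nonneg z w) hs.le

theorem IsQuasisymmetric.eq_of_eq (hd : IsSemimetric d) (hρ : IsSemimetric ρ)
    (hinj : Function.Injective f) (hq : IsQuasisymmetric d ρ η f)
    (hcond : ∀ k : ℝ, 0 < k → η k * η (1 / k) = 1) {x y z w : X} (h : d x y = d z w) :
    ρ (f x) (f y) = ρ (f z) (f w) := by
  rcases eq_or_ne z w with rfl | hzw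
  · rw [hd.self_s19, hd.eq_iff] at h
    rw [h, hρ.self_s19, hρ.self_s19]
  obtain ⟨s, c, -, -, hxy, hzw⟩ := hq.exists_common_scale hd hρ hinj hcond x y hzw
  rw [hxy, hzw, h]

theorem exists_isWeakSimilarity (hbij : Function.Bijective f)
    (hlt : ∀ x y z w : X, d x y < d z w → ρ (f x) (f y) < ρ (f z) (f w))
    (heq : ∀ x y z w : X, d x y = d z w → ρ (f x) (f y) = ρ (f z) (f w)) :
    ∃ φ : ℝ → ℝ, IsWeakSimilarity d ρ f φ := by
  classical
  set φ := Function.extend (fun p : X × X => d p.1 p.2) (fun p => ρ (f p.1) (f p.2)) 0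
  have hφ : ∀ x y, φ (d x y) = ρ (f x) (f y) := by
    intro x y
    have hex : ∃ p : X × X, d p.1 p.2 = d x y := ⟨(x, y), rfl⟩
    simp only [φ, Function.extend_def, dif_pos hex]
    exact heq _ _ _ _ hex.choose_spec
  refine ⟨φ, hbij, ?_, ?_, hφ⟩
  · rintro _ ⟨x, y, rfl⟩ _ ⟨z, w, rfl⟩ h
    rw [hφ, hφ]
    exact hlt x y z w h
  · ext s
    constructor
    · rintro ⟨_, ⟨x, y, rfl⟩, rfl⟩
      exact ⟨f x, f y, hφ x y⟩
    · rintro ⟨u, v, rfl⟩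
      obtain ⟨x, rfl⟩ := hbij.2 u
      obtain ⟨y, rfl⟩ := hbij.2 v
      exact ⟨d x y, ⟨x, y, rfl⟩, hφ x y⟩

end

theorem stmt_19 {X Y : Type*} (d : X → X → ℝ) (ρ : Y → Y → ℝ) (η : ℝ → ℝ) (f : X → Y)
    (hd : IsSemimetric d) (hρ : IsSemimetric ρ)
    (hbij : Function.Bijective f)
    (hq : IsQuasisymmetric d ρ η f)
    (hcond : ∀ k : ℝ, 0 < k → η k * η (1 / k) = 1) :
    (∃ φ : ℝ → ℝ, IsWeakSimilarity d ρ f φ) ∧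
      (∀ x y z w : X, d x y < d z w → ρ (f x) (f y) < ρ (f z) (f w)) ∧
      (∀ x y z w : X, d x y = d z w → ρ (f x) (f y) = ρ (f z) (f w)) := by
  have hlt (x y z w : X) : d x y < d z w → ρ (f x) (f y) < ρ (f z) (f w) :=
    hq.lt_of_lt hd hρ hbij.1 hcond
  have heq (x y z w : X) : d x y = d z w → ρ (f x) (f y) = ρ (f z) (f w) :=
    hq.eq_of_eq hd hρ hbij.1 hcond
  exact ⟨exists_isWeakSimilarity hbij hlt heq, hlt, heq⟩
end
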